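/- arXiv:1307.8140 — 7 statements merged into one kernel-verified Lean document; each statement's English description precedes it below -/
import Mathlib

section
/- Let γ_1, …, γ_m ∈ ℝ^{m−n}, c ∈ ℝ^{m−n}, and Z = {z ∈ ℂ^m : Σ_k |z_k|² γ_k = c}. Let L be the additive subgroup of ℝ^{m−n} generated by γ_1, …, γ_m. Suppose that for every z ∈ Z, the additive subgroup generated by {γ_k : z_k ≠ 0} equals L. Then the torus T_Γ = {(e^{2πi⟨γ_1,φ⟩}, …, e^{2πi⟨γ_m,φ⟩}) : φ ∈ ℝ^{m−n}} acts freely on Z: for every z ∈ Z and φ ∈ ℝ^{m−n}, if e^{2πi⟨γ_k,φ⟩} z_k = z_k for all k, then e^{2πi⟨γ_k,φ⟩} = 1 for all k. -/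
/-! The rotation by `φ` fixes `z` exactly when the character `χ_φ(v) = exp(2πi⟨v, φ⟩)` is trivial
on every `γ_k` with `z_k ≠ 0`. The kernel of `χ_φ` is a subgroup, so it then contains the group
generated by these `γ_k`, which by hypothesis is all of `L`; hence `χ_φ(γ_k) = 1` for every `k`. -/

open Real

theorem AddSubgroup.apply_mem_of_closure_image_eq_closure_range {G ι : Type*} [AddGroup G]
    {γ : ι → G} {S : Set ι} (hS : closure (γ '' S) = closure (Set.range γ))
    {H : AddSubgroup G} (hH : ∀ i ∈ S, γ i ∈ H) (k : ι) : γ k ∈ H :=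
  (closure_le H).2 (Set.image_subset_iff.2 hH) (hS ▸ subset_closure ⟨k, rfl⟩)

section TorusCharacter

variable {ι : Type*} [Fintype ι]

/-- `T_Γ` is the image of `φ ↦ (torusCharacter φ (γ k))ₖ`. -/
noncomputable def torusCharacter (φ : ι → ℝ) : (ι → ℝ) →+ Additive Circle :=
  Circle.expHom.comp
    (AddMonoidHom.mk' (fun v => 2 * π * ∑ j, v j * φ j)
      fun v w => by simp only [Pi.add_apply, add_mul, Finset.sum_add_distrib, mul_add])

theorem mem_ker_torusCharacter {φ v : ι → ℝ} :
    v ∈ (torusCharacter φ).ker ↔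
      Complex.exp (((2 * π * ∑ j, v j * φ j : ℝ) : ℂ) * Complex.I) = 1 := by
  rw [AddMonoidHom.mem_ker, ← Circle.coe_exp, ← Circle.coe_one, Circle.coe_inj]
  rfl

end TorusCharacter

/-- If for every `z` in the moment-angle set `Z = {z : ∑ₖ |z_k|² γ_k = c}` the additive subgroup
generated by `{γ_k : z_k ≠ 0}` equals the additive subgroup `L` generated by all of
`γ₁,…,γₘ`, then the torus `T_Γ = {(e^{2πi⟨γ₁,φ⟩},…,e^{2πi⟨γₘ,φ⟩})}` acts freely on `Z`. -/
theorem stmt_8 (m n : ℕ) (γ : Fin m → Fin (m - n) → ℝ) (c : Fin (m - n) → ℝ)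
    (hL : ∀ z : Fin m → ℂ, (∑ k, Complex.normSq (z k) • γ k) = c →
      AddSubgroup.closure (γ '' {k | z k ≠ 0}) = AddSubgroup.closure (Set.range γ)) :
    ∀ z : Fin m → ℂ, (∑ k, Complex.normSq (z k) • γ k) = c →
      ∀ φ : Fin (m - n) → ℝ,
        (∀ k, Complex.exp (((2 * Real.pi * ∑ j, γ k j * φ j : ℝ) : ℂ) * Complex.I) * z k
            = z k) →
        ∀ k, Complex.exp (((2 * Real.pi * ∑ j, γ k j * φ j : ℝ) : ℂ) * Complex.I) = 1 := by
  intro z hz φ hfix k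
  have hsupport : ∀ i ∈ {i | z i ≠ 0}, γ i ∈ (torusCharacter φ).ker := fun i hi =>
    mem_ker_torusCharacter.2 ((mul_eq_right₀ hi).1 (hfix i))
  exact mem_ker_torusCharacter.1
    (AddSubgroup.apply_mem_of_closure_image_eq_closure_range (hL z hz) hsupport k)
end

section
/- Let p, q ≥ 1, m = p + q, let γ_{k1} > 0 for 1 ≤ k ≤ m, let c > 0, and let γ_{k2} > 0 for 1 ≤ k ≤ p and γ_{k2} < 0 for p+1 ≤ k ≤ m. Then the intersection of two Hermitian quadrics Z = {z ∈ ℂ^m : Σ_{k=1}^m γ_{k1}|z_k|² = c and Σ_{k=1}^m γ_{k2}|z_k|² = 0} is homeomorphic to the product of spheres S^{2p−1} × S^{2q−1}. -/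
/-!
Write `z = (u, v) ∈ ℂᵖ × ℂ^q` and split both quadratic forms accordingly; moving the negative
block of the second form to the other side, `Z` is `{A₁ u + B₁ v = c, A₂ u = B₂ v}` with all four
forms positive definite. No point of `Z` has `u = 0` or `v = 0`, and for unit vectors `x, y` the
point `(s • x, t • y)` with `s, t > 0` lies on `Z` iff `(s², t²)` solves a `2 × 2` linear system
with nonzero determinant. So `Z` is the graph of a continuous positive radius function over
`S^{2p-1} × S^{2q-1}`, and `(u, v) ↦ (u / ‖u‖, v / ‖v‖)` is a homeomorphism.
-/

open Metric

section RadialGraph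

variable {E F : Type*} [NormedAddCommGroup E] [NormedSpace ℝ E]
  [NormedAddCommGroup F] [NormedSpace ℝ F]

lemma inv_norm_smul_mem_unit_sphere {x : E} (hx : x ≠ 0) : ‖x‖⁻¹ • x ∈ sphere (0 : E) 1 := by
  simpa using norm_smul_inv_norm (𝕜 := ℝ) hx

lemma inv_norm_smul_smul_of_mem_unit_sphere {x : E} (hx : x ∈ sphere (0 : E) 1) {a : ℝ}
    (ha : 0 < a) : ‖a • x‖⁻¹ • a • x = x := by
  rw [norm_smul, mem_sphere_zero_iff_norm.mp hx, mul_one, Real.norm_of_nonneg ha.le,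
    inv_smul_smul₀ ha.ne']

noncomputable def homeomorphSphereProdOfRadialGraph (X : Set (E × F))
    (hX : ∀ z ∈ X, z.1 ≠ 0 ∧ z.2 ≠ 0)
    (s t : sphere (0 : E) 1 × sphere (0 : F) 1 → ℝ) (hs : Continuous s) (ht : Continuous t)
    (hs₀ : ∀ w, 0 < s w) (ht₀ : ∀ w, 0 < t w)
    (hX_iff : ∀ w (a b : ℝ), 0 < a → 0 < b →
      ((a • (w.1 : E), b • (w.2 : F)) ∈ X ↔ a = s w ∧ b = t w)) :
    X ≃ₜ sphere (0 : E) 1 × sphere (0 : F) 1 where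
  toFun z := (⟨_, inv_norm_smul_mem_unit_sphere (hX z z.2).1⟩,
    ⟨_, inv_norm_smul_mem_unit_sphere (hX z z.2).2⟩)
  invFun w := ⟨(s w • (w.1 : E), t w • (w.2 : F)), (hX_iff w _ _ (hs₀ w) (ht₀ w)).2 ⟨rfl, rfl⟩⟩
  left_inv := by
    rintro ⟨⟨u, v⟩, hz⟩
    have hu := norm_ne_zero_iff.2 (hX _ hz).1
    have hv := norm_ne_zero_iff.2 (hX _ hz).2
    obtain ⟨hsu, htv⟩ := (hX_iff (⟨_, inv_norm_smul_mem_unit_sphere (hX _ hz).1⟩,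
      ⟨_, inv_norm_smul_mem_unit_sphere (hX _ hz).2⟩) ‖u‖ ‖v‖ (norm_pos_iff.2 (hX _ hz).1)
      (norm_pos_iff.2 (hX _ hz).2)).1 (by simpa only [smul_inv_smul₀ hu, smul_inv_smul₀ hv])
    ext
    · exact (congrArg (· • _) hsu.symm).trans (smul_inv_smul₀ hu u)
    · exact (congrArg (· • _) htv.symm).trans (smul_inv_smul₀ hv v)
  right_inv := by
    rintro ⟨x, y⟩
    ext <;> simp only [inv_norm_smul_smul_of_mem_unit_sphere x.2 (hs₀ _),
      inv_norm_smul_smul_of_mem_unit_sphere y.2 (ht₀ _)]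
  continuous_toFun := by
    have hfst : Continuous fun z : X => (z : E × F).1 := by fun_prop
    have hsnd : Continuous fun z : X => (z : E × F).2 := by fun_prop
    exact .prodMk
      (((hfst.norm.inv₀ fun z => norm_ne_zero_iff.2 (hX z z.2).1).smul hfst).subtype_mk _)
      (((hsnd.norm.inv₀ fun z => norm_ne_zero_iff.2 (hX z z.2).2).smul hsnd).subtype_mk _)
  continuous_invFun :=
    .subtype_mk (.prodMk (hs.smul (by fun_prop)) (ht.smul (by fun_prop))) _

end RadialGraph

section WeightedNormSq

variable {ι : Type*} [Fintype ι]

noncomputable def weightedNormSq (a : ι → ℝ) (x : EuclideanSpace ℂ ι) : ℝ :=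
  ∑ i, a i * Complex.normSq (x i)

lemma weightedNormSq_smul (a : ι → ℝ) (r : ℝ) (x : EuclideanSpace ℂ ι) :
    weightedNormSq a (r • x) = r ^ 2 * weightedNormSq a x := by
  simp only [weightedNormSq, PiLp.smul_apply, Complex.real_smul, Complex.normSq_mul,
    Complex.normSq_ofReal, Finset.mul_sum]
  exact Finset.sum_congr rfl fun i _ => by ring

lemma weightedNormSq_pos {a : ι → ℝ} (ha : ∀ i, 0 < a i) {x : EuclideanSpace ℂ ι} (hx : x ≠ 0) :
    0 < weightedNormSq a x := by
  obtain ⟨i, hi⟩ : ∃ i, x i ≠ 0 := by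
    by_contra! h
    exact hx (PiLp.ext h)
  exact Finset.sum_pos' (fun j _ => mul_nonneg (ha j).le (Complex.normSq_nonneg _))
    ⟨i, Finset.mem_univ i, mul_pos (ha i) (Complex.normSq_pos.2 hi)⟩

@[fun_prop]
lemma continuous_weightedNormSq (a : ι → ℝ) : Continuous (weightedNormSq a) := by
  unfold weightedNormSq
  fun_prop

@[simp]
lemma weightedNormSq_zero (a : ι → ℝ) : weightedNormSq a 0 = 0 := by
  simp [weightedNormSq]

lemma weightedNormSq_eq_zero_iff {a : ι → ℝ} (ha : ∀ i, 0 < a i) {x : EuclideanSpace ℂ ι} :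
    weightedNormSq a x = 0 ↔ x = 0 :=
  ⟨fun h => by_contra fun hx => (weightedNormSq_pos ha hx).ne' h,
    fun h => h ▸ weightedNormSq_zero a⟩

end WeightedNormSq

lemma mul_add_mul_eq_and_mul_eq_mul_iff {K : Type*} [Field K] {A₁ A₂ B₁ B₂ c S T : K}
    (hD : B₁ * A₂ + A₁ * B₂ ≠ 0) :
    S * A₁ + T * B₁ = c ∧ S * A₂ = T * B₂ ↔
      S = c * B₂ / (B₁ * A₂ + A₁ * B₂) ∧ T = c * A₂ / (B₁ * A₂ + A₁ * B₂) := by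
  rw [eq_div_iff hD, eq_div_iff hD]
  constructor
  · rintro ⟨h₁, h₂⟩
    exact ⟨by linear_combination B₂ * h₁ + B₁ * h₂, by linear_combination A₂ * h₁ - A₁ * h₂⟩
  · rintro ⟨hS, hT⟩
    exact ⟨mul_right_cancel₀ hD (by linear_combination A₁ * hS + B₁ * hT),
      mul_right_cancel₀ hD (by linear_combination A₂ * hS - B₂ * hT)⟩

section QuadricIntersection

variable {ι κ : Type*} [Fintype ι] [Fintype κ] (a₁ a₂ : ι → ℝ) (b₁ b₂ : κ → ℝ) (c : ℝ)

def quadricIntersection : Set (EuclideanSpace ℂ ι × EuclideanSpace ℂ κ) :=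
  {z | weightedNormSq a₁ z.1 + weightedNormSq b₁ z.2 = c ∧
    weightedNormSq a₂ z.1 = weightedNormSq b₂ z.2}

variable {a₁ a₂ b₁ b₂ c}

lemma ne_zero_of_mem_quadricIntersection (ha₂ : ∀ i, 0 < a₂ i) (hb₂ : ∀ j, 0 < b₂ j)
    (hc : c ≠ 0) {z} (hz : z ∈ quadricIntersection a₁ a₂ b₁ b₂ c) : z.1 ≠ 0 ∧ z.2 ≠ 0 := by
  obtain ⟨h₁, h₂⟩ := hz
  have hiff : z.1 = 0 ↔ z.2 = 0 := by
    rw [← weightedNormSq_eq_zero_iff ha₂, ← weightedNormSq_eq_zero_iff hb₂, h₂]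
  have hboth : ¬(z.1 = 0 ∧ z.2 = 0) := fun ⟨hu, hv⟩ => hc (by simpa [hu, hv] using h₁.symm)
  tauto

variable (a₁ a₂ b₁ b₂) in
noncomputable def quadricDet (x : EuclideanSpace ℂ ι) (y : EuclideanSpace ℂ κ) : ℝ :=
  weightedNormSq b₁ y * weightedNormSq a₂ x + weightedNormSq a₁ x * weightedNormSq b₂ y

lemma quadricDet_pos (ha₁ : ∀ i, 0 < a₁ i) (ha₂ : ∀ i, 0 < a₂ i) (hb₁ : ∀ j, 0 < b₁ j)
    (hb₂ : ∀ j, 0 < b₂ j) {x : EuclideanSpace ℂ ι} {y : EuclideanSpace ℂ κ} (hx : x ≠ 0)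
    (hy : y ≠ 0) : 0 < quadricDet a₁ a₂ b₁ b₂ x y := by
  have := weightedNormSq_pos ha₁ hx
  have := weightedNormSq_pos ha₂ hx
  have := weightedNormSq_pos hb₁ hy
  have := weightedNormSq_pos hb₂ hy
  unfold quadricDet
  positivity

lemma smul_mem_quadricIntersection_iff {x : EuclideanSpace ℂ ι} {y : EuclideanSpace ℂ κ}
    (hD : quadricDet a₁ a₂ b₁ b₂ x y ≠ 0) {s t : ℝ} (hs : 0 < s) (ht : 0 < t) :
    (s • x, t • y) ∈ quadricIntersection a₁ a₂ b₁ b₂ c ↔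
      s = √(c * weightedNormSq b₂ y / quadricDet a₁ a₂ b₁ b₂ x y) ∧
      t = √(c * weightedNormSq a₂ x / quadricDet a₁ a₂ b₁ b₂ x y) := by
  simp only [quadricIntersection, Set.mem_ofPred_eq, weightedNormSq_smul, sq]
  rw [mul_add_mul_eq_and_mul_eq_mul_iff hD, eq_comm (a := s), eq_comm (a := t),
    Real.sqrt_eq_iff_mul_self_eq_of_pos hs, Real.sqrt_eq_iff_mul_self_eq_of_pos ht]
  rfl

variable (a₁ a₂ b₁ b₂ c) in
noncomputable def quadricIntersectionHomeomorphSphereProd (ha₁ : ∀ i, 0 < a₁ i)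
    (ha₂ : ∀ i, 0 < a₂ i) (hb₁ : ∀ j, 0 < b₁ j) (hb₂ : ∀ j, 0 < b₂ j) (hc : 0 < c) :
    quadricIntersection a₁ a₂ b₁ b₂ c ≃ₜ
      sphere (0 : EuclideanSpace ℂ ι) 1 × sphere (0 : EuclideanSpace ℂ κ) 1 :=
  have hD (w : sphere (0 : EuclideanSpace ℂ ι) 1 × sphere (0 : EuclideanSpace ℂ κ) 1) :
      0 < quadricDet a₁ a₂ b₁ b₂ w.1 w.2 :=
    quadricDet_pos ha₁ ha₂ hb₁ hb₂ (ne_zero_of_mem_unit_sphere w.1)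
      (ne_zero_of_mem_unit_sphere w.2)
  homeomorphSphereProdOfRadialGraph _
    (fun _ => ne_zero_of_mem_quadricIntersection ha₂ hb₂ hc.ne')
    (fun w => √(c * weightedNormSq b₂ w.2 / quadricDet a₁ a₂ b₁ b₂ w.1 w.2))
    (fun w => √(c * weightedNormSq a₂ w.1 / quadricDet a₁ a₂ b₁ b₂ w.1 w.2))
    (by unfold quadricDet; fun_prop (disch := exact fun w => (hD w).ne'))
    (by unfold quadricDet; fun_prop (disch := exact fun w => (hD w).ne'))
    (fun w => Real.sqrt_pos.2 (div_pos (mul_pos hc (weightedNormSq_pos hb₂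
      (ne_zero_of_mem_unit_sphere w.2))) (hD w)))
    (fun w => Real.sqrt_pos.2 (div_pos (mul_pos hc (weightedNormSq_pos ha₂
      (ne_zero_of_mem_unit_sphere w.1))) (hD w)))
    fun w _ _ hs ht => smul_mem_quadricIntersection_iff (hD w).ne' hs ht

end QuadricIntersection

theorem stmt_9_general (p q : ℕ)
    (γ1 γ2 : Fin (p + q) → ℝ) (c : ℝ) (hc : 0 < c)
    (hγ1 : ∀ k, 0 < γ1 k)
    (hγ2pos : ∀ k : Fin (p + q), (k : ℕ) < p → 0 < γ2 k)
    (hγ2neg : ∀ k : Fin (p + q), p ≤ (k : ℕ) → γ2 k < 0) :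
    Nonempty
      ({z : Fin (p + q) → ℂ |
          (∑ k, γ1 k * Complex.normSq (z k)) = c ∧
          (∑ k, γ2 k * Complex.normSq (z k)) = 0} ≃ₜ
        (Metric.sphere (0 : EuclideanSpace ℂ (Fin p)) 1 ×
          Metric.sphere (0 : EuclideanSpace ℂ (Fin q)) 1)) := by
  let split : (Fin (p + q) → ℂ) ≃ₜ EuclideanSpace ℂ (Fin p) × EuclideanSpace ℂ (Fin q) :=
    (Fin.appendHomeomorph p q).symm.trans
      ((PiLp.homeomorph 2 _).symm.prodCongr (PiLp.homeomorph 2 _).symm)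
  have hsplit (z : Fin (p + q) → ℂ) :
      (∑ k, γ1 k * Complex.normSq (z k) = c ∧ ∑ k, γ2 k * Complex.normSq (z k) = 0) ↔
        split z ∈ quadricIntersection (γ1 ∘ Fin.castAdd q) (γ2 ∘ Fin.castAdd q)
          (γ1 ∘ Fin.natAdd p) (-γ2 ∘ Fin.natAdd p) c := by
    have h₁ (i : Fin p) : (split z).1 i = z (Fin.castAdd q i) := rfl
    have h₂ (j : Fin q) : (split z).2 j = z (Fin.natAdd p j) := rfl
    simp only [quadricIntersection, weightedNormSq, Set.mem_ofPred_eq, h₁, h₂, Fin.sum_univ_add,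
      Function.comp_apply, Pi.neg_apply, neg_mul, Finset.sum_neg_distrib, add_eq_zero_iff_eq_neg]
  exact ⟨(split.subtype hsplit).trans (quadricIntersectionHomeomorphSphereProd _ _ _ _ _
    (fun _ => hγ1 _) (fun _ => hγ2pos _ (by simp)) (fun _ => hγ1 _)
    (fun _ => neg_pos.2 (hγ2neg _ (by simp))) hc)⟩

/-- Two quadrics: the intersection
`Z = {z ∈ ℂᵐ : ∑ γ_{k1}|z_k|² = c, ∑ γ_{k2}|z_k|² = 0}` (with `γ_{k1} > 0`, `c > 0`,
`γ_{k2} > 0` for `k ≤ p` and `γ_{k2} < 0` for `k > p`, `m = p + q`) is homeomorphic to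
`S^{2p-1} × S^{2q-1}`, where `S^{2p-1}` and `S^{2q-1}` are the unit spheres in `ℂᵖ`, `ℂ^q`. -/
theorem stmt_9 (p q : ℕ) (hp : 1 ≤ p) (hq : 1 ≤ q)
    (γ1 γ2 : Fin (p + q) → ℝ) (c : ℝ) (hc : 0 < c)
    (hγ1 : ∀ k, 0 < γ1 k)
    (hγ2pos : ∀ k : Fin (p + q), (k : ℕ) < p → 0 < γ2 k)
    (hγ2neg : ∀ k : Fin (p + q), p ≤ (k : ℕ) → γ2 k < 0) :
    Nonempty
      ({z : Fin (p + q) → ℂ |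
          (∑ k, γ1 k * Complex.normSq (z k)) = c ∧
          (∑ k, γ2 k * Complex.normSq (z k)) = 0} ≃ₜ
        (Metric.sphere (0 : EuclideanSpace ℂ (Fin p)) 1 ×
          Metric.sphere (0 : EuclideanSpace ℂ (Fin q)) 1)) :=
  stmt_9_general p q γ1 γ2 c hc hγ1 hγ2pos hγ2neg
end

section
/- Let p, q ≥ 1, m = p + q, let γ_{k1} > 0 for 1 ≤ k ≤ m, let c > 0, and let γ_{k2} > 0 for 1 ≤ k ≤ p and γ_{k2} < 0 for p+1 ≤ k ≤ m. Then the intersection of two real quadrics R = {u ∈ ℝ^m : Σ_{k=1}^m γ_{k1}u_k² = c and Σ_{k=1}^m γ_{k2}u_k² = 0} is homeomorphic to the product of spheres S^{p−1} × S^{q−1}. -/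
/-!
On the punctured null cone `C` of `∑ γ2 k * u k ^ 2`, both `∑ γ1 k * u k ^ 2` and
`∑ |γ2 k| * u k ^ 2` are positive and homogeneous of degree two, so rescaling along the rays of
`C` identifies their level sets `c` and `2`; the first is the intersection of quadrics. Since
`γ2` is positive on the first `p` coordinates and negative on the last `q`, the second level set
is the product of the ellipsoids `∑_{k<p} γ2 k * u k ^ 2 = 1` and `∑_{k≥p} -γ2 k * u k ^ 2 = 1`,
and a diagonal linear map takes each ellipsoid onto a round sphere.
-/

open Finset

section RadialRescale

variable {E : Type*} [MulAction ℝ E]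

noncomputable def radialRescale (g : E → ℝ) (b : ℝ) (v : E) : E := √(b / g v) • v

variable {C : Set E} {f g : E → ℝ} {a b : ℝ}

theorem radialRescale_mem (hC : ∀ v ∈ C, ∀ t : ℝ, 0 < t → t • v ∈ C)
    (hg : ∀ v ∈ C, ∀ t : ℝ, 0 < t → g (t • v) = t ^ 2 * g v) (hg_pos : ∀ v ∈ C, 0 < g v)
    (hb : 0 < b) {v : E} (hv : v ∈ C) :
    radialRescale g b v ∈ C ∧ g (radialRescale g b v) = b := by
  have hq : 0 < b / g v := div_pos hb (hg_pos v hv)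
  refine ⟨hC v hv _ (Real.sqrt_pos.2 hq), ?_⟩
  rw [radialRescale, hg v hv _ (Real.sqrt_pos.2 hq), Real.sq_sqrt hq.le,
    div_mul_cancel₀ _ (hg_pos v hv).ne']

theorem radialRescale_radialRescale
    (hf : ∀ v ∈ C, ∀ t : ℝ, 0 < t → f (t • v) = t ^ 2 * f v) (hg_pos : ∀ v ∈ C, 0 < g v)
    (ha : 0 < a) (hb : 0 < b) {v : E} (hv : v ∈ C) (hfv : f v = a) :
    radialRescale f a (radialRescale g b v) = v := by
  have hgv := hg_pos v hv
  have hq : 0 < b / g v := div_pos hb hgv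
  rw [radialRescale, radialRescale, hf v hv _ (Real.sqrt_pos.2 hq), Real.sq_sqrt hq.le, hfv,
    smul_smul, ← Real.sqrt_mul (by positivity)]
  convert one_smul ℝ v
  rw [Real.sqrt_eq_one]
  field_simp

theorem continuousOn_radialRescale [TopologicalSpace E] [ContinuousSMul ℝ E]
    (hg_cont : ContinuousOn g C) (hg_pos : ∀ v ∈ C, 0 < g v) :
    ContinuousOn (radialRescale g b) C :=
  (Real.continuous_sqrt.comp_continuousOn
    (continuousOn_const.div hg_cont fun v hv => (hg_pos v hv).ne')).smul continuousOn_id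

noncomputable def levelSetHomeomorphOfHomogeneous [TopologicalSpace E] [ContinuousSMul ℝ E]
    (hC : ∀ v ∈ C, ∀ t : ℝ, 0 < t → t • v ∈ C)
    (hf_cont : ContinuousOn f C) (hg_cont : ContinuousOn g C)
    (hf : ∀ v ∈ C, ∀ t : ℝ, 0 < t → f (t • v) = t ^ 2 * f v)
    (hg : ∀ v ∈ C, ∀ t : ℝ, 0 < t → g (t • v) = t ^ 2 * g v)
    (hf_pos : ∀ v ∈ C, 0 < f v) (hg_pos : ∀ v ∈ C, 0 < g v) (ha : 0 < a) (hb : 0 < b) :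
    {v | v ∈ C ∧ f v = a} ≃ₜ {v | v ∈ C ∧ g v = b} where
  toFun v := ⟨radialRescale g b v, radialRescale_mem hC hg hg_pos hb v.2.1⟩
  invFun w := ⟨radialRescale f a w, radialRescale_mem hC hf hf_pos ha w.2.1⟩
  left_inv v := Subtype.ext (radialRescale_radialRescale hf hg_pos ha hb v.2.1 v.2.2)
  right_inv w := Subtype.ext (radialRescale_radialRescale hg hf_pos hb ha w.2.1 w.2.2)
  continuous_toFun := ((continuousOn_radialRescale hg_cont hg_pos).comp_continuous
    continuous_subtype_val fun v => v.2.1).subtype_mk _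
  continuous_invFun := ((continuousOn_radialRescale hf_cont hf_pos).comp_continuous
    continuous_subtype_val fun w => w.2.1).subtype_mk _

end RadialRescale

section WeightedSumSq

variable {ι : Type*} [Fintype ι] (w : ι → ℝ)

theorem sum_mul_smul_sq (t : ℝ) (u : ι → ℝ) :
    ∑ i, w i * (t • u) i ^ 2 = t ^ 2 * ∑ i, w i * u i ^ 2 := by
  simp only [Pi.smul_apply, smul_eq_mul, mul_pow, mul_sum]
  exact sum_congr rfl fun i _ => by ring

theorem continuous_sum_mul_sq : Continuous fun u : ι → ℝ => ∑ i, w i * u i ^ 2 := by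
  fun_prop

def ellipsoid : Set (ι → ℝ) := {x | ∑ i, w i * x i ^ 2 = 1}

def puncturedNullCone : Set (ι → ℝ) := {u | ∑ i, w i * u i ^ 2 = 0 ∧ u ≠ 0}

variable {w}

theorem sum_mul_sq_pos (hw : ∀ i, 0 < w i) {u : ι → ℝ} (hu : u ≠ 0) :
    0 < ∑ i, w i * u i ^ 2 := by
  obtain ⟨i, hi⟩ := Function.ne_iff.1 hu
  exact sum_pos' (fun j _ => mul_nonneg (hw j).le (sq_nonneg _))
    ⟨i, mem_univ i, mul_pos (hw i) (sq_pos_of_ne_zero hi)⟩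

noncomputable def ellipsoidHomeomorphSphere (hw : ∀ i, 0 < w i) :
    ellipsoid w ≃ₜ Metric.sphere (0 : EuclideanSpace ℝ ι) 1 :=
  ((Homeomorph.piCongrRight fun i => Homeomorph.mulLeft₀ (√(w i))
      (Real.sqrt_pos.2 (hw i)).ne').trans
    (EuclideanSpace.equiv ι ℝ).symm.toHomeomorph).subtype fun x => by
    simp [ellipsoid, EuclideanSpace.norm_eq, mul_pow, Real.sq_sqrt (hw _).le]

theorem smul_mem_puncturedNullCone {u : ι → ℝ} (hu : u ∈ puncturedNullCone w) {t : ℝ}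
    (ht : t ≠ 0) : t • u ∈ puncturedNullCone w :=
  ⟨by rw [sum_mul_smul_sq, hu.1, mul_zero], smul_ne_zero ht hu.2⟩

end WeightedSumSq

section TwoQuadrics

variable {p q : ℕ} {γ1 γ2 : Fin (p + q) → ℝ}

theorem setOf_quadrics_eq_levelSet {c : ℝ} (hc : c ≠ 0) :
    {u : Fin (p + q) → ℝ | (∑ k, γ1 k * u k ^ 2) = c ∧ (∑ k, γ2 k * u k ^ 2) = 0} =
      {u | u ∈ puncturedNullCone γ2 ∧ ∑ k, γ1 k * u k ^ 2 = c} := by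
  ext u
  refine ⟨fun ⟨h1, h2⟩ => ⟨⟨h2, ?_⟩, h1⟩, fun ⟨⟨h2, _⟩, h1⟩ => ⟨h1, h2⟩⟩
  rintro rfl
  simp [eq_comm, hc] at h1

theorem append_mem_levelSet_abs_iff
    (hγ2pos : ∀ k : Fin (p + q), (k : ℕ) < p → 0 < γ2 k)
    (hγ2neg : ∀ k : Fin (p + q), p ≤ (k : ℕ) → γ2 k < 0) (x : Fin p → ℝ) (y : Fin q → ℝ) :
    (Fin.append x y ∈ puncturedNullCone γ2 ∧ ∑ k, |γ2 k| * Fin.append x y k ^ 2 = 2) ↔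
      x ∈ ellipsoid (fun i => γ2 (Fin.castAdd q i)) ∧
        y ∈ ellipsoid (fun j => -γ2 (Fin.natAdd p j)) := by
  have habs_left : ∀ i, |γ2 (Fin.castAdd q i)| = γ2 (Fin.castAdd q i) :=
    fun i => abs_of_pos (hγ2pos _ (by simp))
  have habs_right : ∀ j, |γ2 (Fin.natAdd p j)| = -γ2 (Fin.natAdd p j) :=
    fun j => abs_of_neg (hγ2neg _ (by simp))
  simp only [puncturedNullCone, ellipsoid, Set.mem_ofPred_eq, Fin.sum_univ_add, Fin.append_left,
    Fin.append_right, habs_left, habs_right, neg_mul, sum_neg_distrib]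
  constructor
  · rintro ⟨⟨h0, -⟩, h2⟩
    constructor <;> linarith
  · rintro ⟨hx, hy⟩
    refine ⟨⟨by linarith, fun h => ?_⟩, by linarith⟩
    have hx0 : x = 0 := funext fun i => by simpa using congrFun h (Fin.castAdd q i)
    simp [hx0] at hx

end TwoQuadrics

theorem stmt_10_general (p q : ℕ)
    (γ1 γ2 : Fin (p + q) → ℝ) (c : ℝ) (hc : 0 < c)
    (hγ1 : ∀ k, 0 < γ1 k)
    (hγ2pos : ∀ k : Fin (p + q), (k : ℕ) < p → 0 < γ2 k)
    (hγ2neg : ∀ k : Fin (p + q), p ≤ (k : ℕ) → γ2 k < 0) :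
    Nonempty
      ({u : Fin (p + q) → ℝ |
          (∑ k, γ1 k * u k ^ 2) = c ∧ (∑ k, γ2 k * u k ^ 2) = 0} ≃ₜ
        (Metric.sphere (0 : EuclideanSpace ℝ (Fin p)) 1 ×
          Metric.sphere (0 : EuclideanSpace ℝ (Fin q)) 1)) := by
  have habs : ∀ k, 0 < |γ2 k| := fun k =>
    abs_pos.2 (if h : (k : ℕ) < p then (hγ2pos k h).ne' else (hγ2neg k (not_lt.1 h)).ne)
  have radial := levelSetHomeomorphOfHomogeneous (C := puncturedNullCone γ2)
    (fun u hu t ht => smul_mem_puncturedNullCone hu ht.ne')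
    (continuous_sum_mul_sq γ1).continuousOn (continuous_sum_mul_sq _).continuousOn
    (fun u _ t _ => sum_mul_smul_sq γ1 t u) (fun u _ t _ => sum_mul_smul_sq (|γ2 ·|) t u)
    (fun u hu => sum_mul_sq_pos hγ1 hu.2) (fun u hu => sum_mul_sq_pos habs hu.2) hc two_pos
  have split := ((Fin.appendHomeomorph p q).subtype
    (p := (· ∈ ellipsoid (fun i => γ2 (Fin.castAdd q i)) ×ˢ
      ellipsoid (fun j => -γ2 (Fin.natAdd p j))))
    (q := fun u => u ∈ puncturedNullCone γ2 ∧ ∑ k, |γ2 k| * u k ^ 2 = 2) fun z =>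
    (append_mem_levelSet_abs_iff hγ2pos hγ2neg z.1 z.2).symm).symm
  exact ⟨(Homeomorph.setCongr (setOf_quadrics_eq_levelSet hc.ne')).trans <| radial.trans <|
    split.trans <| (Homeomorph.Set.prod _ _).trans <|
      (ellipsoidHomeomorphSphere fun i => hγ2pos _ (by simp)).prodCongr
        (ellipsoidHomeomorphSphere fun j => neg_pos.2 (hγ2neg _ (by simp)))⟩

/-- Two real quadrics: the intersection
`R = {u ∈ ℝᵐ : ∑ γ_{k1}u_k² = c, ∑ γ_{k2}u_k² = 0}` (with `γ_{k1} > 0`, `c > 0`,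
`γ_{k2} > 0` for `k ≤ p` and `γ_{k2} < 0` for `k > p`, `m = p + q`) is homeomorphic to
`S^{p-1} × S^{q-1}`, where `S^{p-1}` and `S^{q-1}` are the unit spheres in `ℝᵖ`, `ℝ^q`. -/
theorem stmt_10 (p q : ℕ) (hp : 1 ≤ p) (hq : 1 ≤ q)
    (γ1 γ2 : Fin (p + q) → ℝ) (c : ℝ) (hc : 0 < c)
    (hγ1 : ∀ k, 0 < γ1 k)
    (hγ2pos : ∀ k : Fin (p + q), (k : ℕ) < p → 0 < γ2 k)
    (hγ2neg : ∀ k : Fin (p + q), p ≤ (k : ℕ) → γ2 k < 0) :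
    Nonempty
      ({u : Fin (p + q) → ℝ |
          (∑ k, γ1 k * u k ^ 2) = c ∧ (∑ k, γ2 k * u k ^ 2) = 0} ≃ₜ
        (Metric.sphere (0 : EuclideanSpace ℝ (Fin p)) 1 ×
          Metric.sphere (0 : EuclideanSpace ℝ (Fin q)) 1)) :=
  stmt_10_general p q γ1 γ2 c hc hγ1 hγ2pos hγ2neg
end

section
/- Let γ_1, …, γ_m ∈ ℝ^{m−n}, let u, t ∈ ℂ^m with u_k ∈ ℝ for all k and |t_k| = 1 for all k. Let ω be the standard symplectic form on ℂ^m viewed as a real vector space, ω(x, y) = 2 Σ_k Im(x_k · conj(y_k)). Consider the real subspace W of ℂ^m spanned by the set {(t_1 v_1, …, t_m v_m) : v ∈ ℝ^m with Σ_{k=1}^m u_k v_k γ_k = 0} together with the set {(i⟨γ_1, φ⟩ t_1 u_1, …, i⟨γ_m, φ⟩ t_m u_m) : φ ∈ ℝ^{m−n}}. Then W is isotropic for ω: ω(x, y) = 0 for all x, y ∈ W. -/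
open Complex Finset

noncomputable def omegaB (m : ℕ) : (Fin m → ℂ) →ₗ[ℝ] (Fin m → ℂ) →ₗ[ℝ] ℝ :=
  LinearMap.mk₂ ℝ (fun x y => ∑ k, (x k * (starRingEnd ℂ) (y k)).im)
    (by intro x x' y; simp [add_mul, Finset.sum_add_distrib])
    (by intro r x y
        simp only [Pi.smul_apply, Complex.real_smul, mul_assoc, smul_eq_mul, Finset.mul_sum]
        exact Finset.sum_congr rfl fun k _ => by simp [Complex.mul_im]
        )
    (by intro x y y'; simp [mul_add, Finset.sum_add_distrib])
    (by intro r x y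
        simp only [Pi.smul_apply, Complex.real_smul, map_mul, Complex.conj_ofReal,
          smul_eq_mul, Finset.mul_sum]
        refine Finset.sum_congr rfl fun k _ => ?_
        rw [mul_left_comm]; simp [Complex.mul_im])

/-- The tangent space of `N = R_Γ ×_{D_Γ} T_Γ ⊂ ℂᵐ` at a point `z = t·u` (with `u` real,
`|t_k| = 1`) is isotropic for the standard symplectic form `ω(x,y) = 2∑ₖ Im(xₖ conj yₖ)`:
the real span of the rotated tangent vectors of `R_Γ` (i.e. `(t₁v₁,…,tₘvₘ)` with
`∑ₖ uₖvₖ γₖ = 0`) together with the `T_Γ`-orbit directions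
`(i⟨γ₁,φ⟩t₁u₁,…,i⟨γₘ,φ⟩tₘuₘ)` is isotropic. -/
theorem stmt_11 (m n : ℕ) (γ : Fin m → Fin (m - n) → ℝ)
    (u t : Fin m → ℂ) (hu : ∀ k, (u k).im = 0) (ht : ∀ k, ‖t k‖ = 1) :
    ∀ x ∈ Submodule.span ℝ
        ({x : Fin m → ℂ | ∃ v : Fin m → ℝ,
            (∑ k, ((u k).re * v k) • γ k) = 0 ∧ x = fun k => t k * (v k : ℂ)} ∪
          {x : Fin m → ℂ | ∃ φ : Fin (m - n) → ℝ,
            x = fun k => Complex.I * ((∑ j, γ k j * φ j : ℝ) : ℂ) * t k * u k}),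
      ∀ y ∈ Submodule.span ℝ
        ({x : Fin m → ℂ | ∃ v : Fin m → ℝ,
            (∑ k, ((u k).re * v k) • γ k) = 0 ∧ x = fun k => t k * (v k : ℂ)} ∪
          {x : Fin m → ℂ | ∃ φ : Fin (m - n) → ℝ,
            x = fun k => Complex.I * ((∑ j, γ k j * φ j : ℝ) : ℂ) * t k * u k}),
        (2 * ∑ k, (x k * (starRingEnd ℂ) (y k)).im) = 0 := by
  have htc : ∀ k, t k * (starRingEnd ℂ) (t k) = 1 := by
    intro k
    rw [Complex.mul_conj]
    norm_cast
    rw [Complex.normSq_eq_norm_sq, ht k]; norm_num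
  have hu' : ∀ k, u k = (((u k).re : ℝ) : ℂ) := fun k => Complex.ext (by simp) (by simp [hu k])
  intro x hx y hy
  suffices h : omegaB m x y = 0 by
    have : (∑ k, (x k * (starRingEnd ℂ) (y k)).im) = 0 := h
    rw [this]; ring
  induction hx, hy using Submodule.span_induction₂ with
  | zero_left y hy => simp
  | zero_right x hx => simp
  | add_left x y z hx hy hz h1 h2 => rw [map_add, LinearMap.add_apply, h1, h2, add_zero]
  | add_right x y z hx hy hz h1 h2 => rw [map_add, h1, h2, add_zero]
  | smul_left r x y hx hy h1 => rw [map_smul, LinearMap.smul_apply, h1, smul_zero]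
  | smul_right r x y hx hy h1 => rw [map_smul, h1, smul_zero]
  | mem_mem x y hx hy =>
    show (∑ k, (x k * (starRingEnd ℂ) (y k)).im) = 0
    rcases hx with ⟨v, hv, rfl⟩ | ⟨φ, rfl⟩ <;> rcases hy with ⟨w, hw, rfl⟩ | ⟨ψ, rfl⟩
    · -- AA
      refine Finset.sum_eq_zero fun k _ => ?_
      have : t k * (v k : ℂ) * (starRingEnd ℂ) (t k * (w k : ℂ)) = ((v k * w k : ℝ) : ℂ) := by
        rw [map_mul, Complex.conj_ofReal]
        push_cast
        linear_combination ((v k : ℂ) * w k) * htc k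
      rw [this, Complex.ofReal_im]
    · -- AB
      have hv' : ∀ j, ∑ k, (u k).re * v k * γ k j = 0 := by
        intro j
        have := congrFun hv j
        simpa using this
      have hterm : ∀ k, t k * (v k : ℂ) *
          (starRingEnd ℂ) (Complex.I * ((∑ j, γ k j * ψ j : ℝ) : ℂ) * t k * u k)
          = -Complex.I * (((∑ j, γ k j * ψ j) * v k * (u k).re : ℝ) : ℂ) := by
        intro k
        rw [hu' k]
        simp only [map_mul, Complex.conj_ofReal, Complex.conj_I, Complex.ofReal_re]
        push_cast
        linear_combination (-Complex.I * (∑ j, (γ k j : ℂ) * ψ j) * (v k) * (u k).re) * htc k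
      calc ∑ k, (t k * (v k : ℂ) *
              (starRingEnd ℂ) (Complex.I * ((∑ j, γ k j * ψ j : ℝ) : ℂ) * t k * u k)).im
          = ∑ k, -((∑ j, γ k j * ψ j) * v k * (u k).re) := by
            refine Finset.sum_congr rfl fun k _ => ?_
            rw [hterm k]; simp
        _ = -∑ k, (∑ j, γ k j * ψ j) * v k * (u k).re := by rw [Finset.sum_neg_distrib]
        _ = 0 := by
            simp_rw [Finset.sum_mul]
            rw [Finset.sum_comm]
            rw [neg_eq_zero]
            refine Finset.sum_eq_zero fun j _ => ?_
            calc ∑ k, γ k j * ψ j * v k * (u k).re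
                = ψ j * ∑ k, (u k).re * v k * γ k j := by
                  rw [Finset.mul_sum]; exact Finset.sum_congr rfl fun k _ => by ring
              _ = 0 := by rw [hv' j, mul_zero]
    · -- BA
      have hw' : ∀ j, ∑ k, (u k).re * w k * γ k j = 0 := by
        intro j
        have := congrFun hw j
        simpa using this
      have hterm : ∀ k, Complex.I * ((∑ j, γ k j * φ j : ℝ) : ℂ) * t k * u k *
          (starRingEnd ℂ) (t k * (w k : ℂ))
          = Complex.I * (((∑ j, γ k j * φ j) * w k * (u k).re : ℝ) : ℂ) := by
        intro k
        rw [hu' k]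
        simp only [map_mul, Complex.conj_ofReal, Complex.conj_I, Complex.ofReal_re]
        push_cast
        linear_combination (Complex.I * (∑ j, (γ k j : ℂ) * φ j) * (w k) * (u k).re) * htc k
      calc ∑ k, (Complex.I * ((∑ j, γ k j * φ j : ℝ) : ℂ) * t k * u k *
              (starRingEnd ℂ) (t k * (w k : ℂ))).im
          = ∑ k, (∑ j, γ k j * φ j) * w k * (u k).re := by
            refine Finset.sum_congr rfl fun k _ => ?_
            rw [hterm k]; simp
        _ = 0 := by
            simp_rw [Finset.sum_mul]
            rw [Finset.sum_comm]
            refine Finset.sum_eq_zero fun j _ => ?_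
            calc ∑ k, γ k j * φ j * w k * (u k).re
                = φ j * ∑ k, (u k).re * w k * γ k j := by
                  rw [Finset.mul_sum]; exact Finset.sum_congr rfl fun k _ => by ring
              _ = 0 := by rw [hw' j, mul_zero]
    · -- BB
      refine Finset.sum_eq_zero fun k _ => ?_
      have : Complex.I * ((∑ j, γ k j * φ j : ℝ) : ℂ) * t k * u k *
          (starRingEnd ℂ) (Complex.I * ((∑ j, γ k j * ψ j : ℝ) : ℂ) * t k * u k)
          = (((∑ j, γ k j * φ j) * (∑ j, γ k j * ψ j) * (u k).re ^ 2 : ℝ) : ℂ) := by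
        rw [hu' k]
        simp only [map_mul, Complex.conj_ofReal, Complex.conj_I, Complex.ofReal_re]
        push_cast
        linear_combination (-Complex.I^2 * (∑ j, (γ k j:ℂ) * φ j) * (∑ j, (γ k j:ℂ) * ψ j) * ((u k).re:ℂ) ^ 2) * htc k
          + (-(∑ j, (γ k j:ℂ) * φ j) * (∑ j, (γ k j:ℂ) * ψ j) * ((u k).re:ℂ) ^ 2) * Complex.I_sq
      rw [this, Complex.ofReal_im]
end

section
/- Let γ_1, …, γ_m ∈ ℝ^{m−n}, and for φ ∈ ℝ^{m−n} let T_φ : ℂ^m → ℂ^m be the map (T_φ z)_k = e^{2πi⟨γ_k,φ⟩} z_k. Let f : ℂ^m → ℝ be continuously differentiable, and let X : ℂ^m → ℂ^m be a continuous vector field such that (1) X is Hamiltonian with Hamiltonian function f, i.e. for all z, w ∈ ℂ^m the real Fréchet derivative of f at z applied to w equals ω(X(z), w), where ω(x, y) = 2 Σ_k Im(x_k conj(y_k)); and (2) X is T_Γ-equivariant: X(T_φ z) = T_φ(X(z)) for all φ ∈ ℝ^{m−n} and z ∈ ℂ^m. Then the moment map μ_Γ(z) = Σ_k |z_k|² γ_k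 is constant along X: for every z ∈ ℂ^m, the real Fréchet derivative of μ_Γ at z applied to X(z) is zero. -/
open Complex ComplexConjugate Finset Set

/-! Fix a coordinate direction `eⱼ` and let `ξ z = (2πi γₖⱼ zₖ)ₖ` generate the circle
`t ↦ T_{t eⱼ}`. Along the orbit of `z` the Hamiltonian `f` changes at the rate
`ω(X(T z), T(ξ z)) = ω(T(X z), T(ξ z)) = ω(X z, ξ z)` by equivariance and unitarity, so `f` is affine
in `t`. The orbit lies in the compact torus `∏ₖ {|wₖ| = |zₖ|}`, where `f` is bounded, so the rate
vanishes; and it is `-2π` times the `j`-th component of `dμ_Γ(z)(X z)`. -/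

lemma eq_zero_of_hasDerivAt_of_bddAbove {g : ℝ → ℝ} {C : ℝ} (hg : ∀ t, HasDerivAt g C t)
    (hb : BddAbove (range g)) : C = 0 := by
  have haffine : ∀ t, g t = g 0 + C * t := by
    have hderiv : ∀ t, HasDerivAt (fun t => g t - C * t) 0 t := fun t => by
      simpa using (hg t).fun_sub ((hasDerivAt_id' t).const_mul C)
    intro t
    have hconst := is_const_of_deriv_eq_zero (fun t => (hderiv t).differentiableAt)
      (fun t => (hderiv t).deriv) t 0
    simp only [mul_zero, sub_zero] at hconst
    linarith
  by_contra hC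
  obtain ⟨B, hB⟩ := hb
  have hle := hB (mem_range_self ((B - g 0 + 1) / C))
  rw [haffine, mul_div_cancel₀ _ hC] at hle
  linarith

section Rotation

variable {ι : Type*}

noncomputable def rotate (c : ι → ℝ) (t : ℝ) (z : ι → ℂ) : ι → ℂ :=
  fun k => exp (((c k * t : ℝ) : ℂ) * I) * z k

def symplecticForm [Fintype ι] (x y : ι → ℂ) : ℝ :=
  2 * ∑ k, (x k * conj (y k)).im

lemma norm_rotate_apply (c : ι → ℝ) (t : ℝ) (z : ι → ℂ) (k : ι) :
    ‖rotate c t z k‖ = ‖z k‖ := by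
  rw [rotate, norm_mul, norm_exp_ofReal_mul_I, one_mul]

lemma hasDerivAt_rotate (c : ι → ℝ) (z : ι → ℂ) (t : ℝ) :
    HasDerivAt (fun t => rotate c t z) (rotate c t fun k => c k * I * z k) t := by
  rw [hasDerivAt_pi]
  intro k
  have hphase : HasDerivAt (fun t : ℝ => ((c k * t : ℝ) : ℂ) * I) (c k * I) t := by
    simpa using ((hasDerivAt_id (t : ℂ)).comp_ofReal.const_mul (c k : ℂ)).mul_const I
  exact (hphase.cexp.mul_const (z k)).congr_deriv (by simp only [rotate]; ring)

lemma symplecticForm_rotate [Fintype ι] (c : ι → ℝ) (t : ℝ) (x y : ι → ℂ) :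
    symplecticForm (rotate c t x) (rotate c t y) = symplecticForm x y := by
  unfold symplecticForm rotate
  refine congrArg (2 * ·) (sum_congr rfl fun k _ => ?_)
  set u := exp (((c k * t : ℝ) : ℂ) * I)
  have hu : u * conj u = 1 := by
    rw [mul_conj, normSq_eq_norm_sq, norm_exp_ofReal_mul_I]; simp
  calc (u * x k * conj (u * y k)).im = ((u * conj u) * (x k * conj (y k))).im := by
        rw [map_mul]; ring_nf
    _ = (x k * conj (y k)).im := by rw [hu, one_mul]

lemma symplecticForm_I_mul [Fintype ι] (c : ι → ℝ) (x z : ι → ℂ) :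
    symplecticForm x (fun k => c k * I * z k) = -2 * ∑ k, c k * (x k * conj (z k)).re := by
  simp only [symplecticForm, map_mul, conj_ofReal, conj_I, mul_sum, neg_mul]
  refine sum_congr rfl fun k _ => ?_
  simp only [mul_im, mul_re, ofReal_re, ofReal_im, I_re, I_im, neg_re, neg_im]
  ring

lemma bddAbove_range_comp_rotate [Fintype ι] {f : (ι → ℂ) → ℝ} (hf : Continuous f)
    (c : ι → ℝ) (z : ι → ℂ) : BddAbove (range fun t => f (rotate c t z)) := by
  have hK : IsCompact (univ.pi fun k => Metric.sphere (0 : ℂ) ‖z k‖) :=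
    isCompact_univ_pi fun k => isCompact_sphere _ _
  refine (hK.bddAbove_image hf.continuousOn).mono ?_
  rintro _ ⟨t, rfl⟩
  exact mem_image_of_mem f fun k _ => by simp [norm_rotate_apply]

end Rotation

lemma fderiv_momentMap_apply {ι E : Type*} [Fintype ι] [NormedAddCommGroup E] [NormedSpace ℝ E]
    (γ : ι → E) (z v : ι → ℂ) :
    fderiv ℝ (fun z : ι → ℂ => ∑ k, normSq (z k) • γ k) z v =
      ∑ k, (2 * (v k * conj (z k)).re) • γ k := by
  have hμ : HasFDerivAt (fun z : ι → ℂ => ∑ k, normSq (z k) • γ k)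
      (∑ k, (2 • (innerSL ℝ (z k)).comp (ContinuousLinearMap.proj k)).smulRight (γ k)) z := by
    simp only [normSq_eq_norm_sq]
    exact HasFDerivAt.fun_sum fun k _ => (hasFDerivAt_apply k z).norm_sq.smul_const (γ k)
  simp [hμ.fderiv, Complex.inner, mul_add]

theorem sum_mul_re_mul_conj_eq_zero_of_hamiltonian {ι : Type*} [Fintype ι]
    {f : (ι → ℂ) → ℝ} (hf : ContDiff ℝ 1 f) {X : (ι → ℂ) → ι → ℂ}
    (hHam : ∀ z w, fderiv ℝ f z w = symplecticForm (X z) w) (c : ι → ℝ) (z : ι → ℂ)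
    (hX : ∀ t, X (rotate c t z) = rotate c t (X z)) :
    ∑ k, c k * (X z k * conj (z k)).re = 0 := by
  have hderiv : ∀ t, HasDerivAt (fun t => f (rotate c t z))
      (symplecticForm (X z) fun k => c k * I * z k) t := fun t => by
    have hchain := ((hf.differentiable one_ne_zero _).hasFDerivAt).comp_hasDerivAt t
      (hasDerivAt_rotate c z t)
    rwa [hHam, hX, symplecticForm_rotate] at hchain
  have hrate := eq_zero_of_hasDerivAt_of_bddAbove hderiv
    (bddAbove_range_comp_rotate hf.continuous c z)
  rw [symplecticForm_I_mul] at hrate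
  linarith

theorem stmt_12_general (m n : ℕ) (γ : Fin m → Fin (m - n) → ℝ)
    (f : (Fin m → ℂ) → ℝ) (hf : ContDiff ℝ 1 f)
    (X : (Fin m → ℂ) → Fin m → ℂ)
    (hHam : ∀ z w : Fin m → ℂ,
      fderiv ℝ f z w = 2 * ∑ k, (X z k * (starRingEnd ℂ) (w k)).im)
    (hEquiv : ∀ (φ : Fin (m - n) → ℝ) (z : Fin m → ℂ),
      X (fun k =>
          Complex.exp (((2 * Real.pi * ∑ j, γ k j * φ j : ℝ) : ℂ) * Complex.I) * z k) =
        fun k =>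
          Complex.exp (((2 * Real.pi * ∑ j, γ k j * φ j : ℝ) : ℂ) * Complex.I) * X z k) :
    ∀ z : Fin m → ℂ,
      fderiv ℝ (fun z : Fin m → ℂ => ∑ k, Complex.normSq (z k) • γ k) z (X z) = 0 := by
  intro z
  rw [fderiv_momentMap_apply]
  funext j
  have hangle : ∀ (t : ℝ) k, 2 * Real.pi * γ k j * t =
      2 * Real.pi * ∑ i, γ k i * (t • Pi.single j 1 : Fin (m - n) → ℝ) i := fun t k => by
    simp [Pi.single_apply, mul_assoc]
  have hX : ∀ t, X (rotate (fun k => 2 * Real.pi * γ k j) t z) =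
      rotate (fun k => 2 * Real.pi * γ k j) t (X z) := fun t => by
    unfold rotate
    simp only [hangle]
    exact hEquiv _ z
  have hrate := sum_mul_re_mul_conj_eq_zero_of_hamiltonian hf hHam _ z hX
  simp only [Finset.sum_apply, Pi.smul_apply, smul_eq_mul, Pi.zero_apply]
  refine (mul_eq_zero.mp ?_).resolve_left Real.pi_ne_zero
  rw [mul_sum, ← hrate]
  exact sum_congr rfl fun k _ => by ring

/-- Noether's theorem for the torus `T_Γ` acting coordinatewise on `ℂᵐ`: if `X` is a continuous
`T_Γ`-equivariant vector field which is Hamiltonian with `C¹` Hamiltonian function `f`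
(with respect to `ω(x,y) = 2∑ₖ Im(xₖ conj yₖ)`), then the moment map
`μ_Γ(z) = ∑ₖ |z_k|² γ_k` is constant along `X`. -/
theorem stmt_12 (m n : ℕ) (γ : Fin m → Fin (m - n) → ℝ)
    (f : (Fin m → ℂ) → ℝ) (hf : ContDiff ℝ 1 f)
    (X : (Fin m → ℂ) → Fin m → ℂ) (hXc : Continuous X)
    (hHam : ∀ z w : Fin m → ℂ,
      fderiv ℝ f z w = 2 * ∑ k, (X z k * (starRingEnd ℂ) (w k)).im)
    (hEquiv : ∀ (φ : Fin (m - n) → ℝ) (z : Fin m → ℂ),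
      X (fun k =>
          Complex.exp (((2 * Real.pi * ∑ j, γ k j * φ j : ℝ) : ℂ) * Complex.I) * z k) =
        fun k =>
          Complex.exp (((2 * Real.pi * ∑ j, γ k j * φ j : ℝ) : ℂ) * Complex.I) * X z k) :
    ∀ z : Fin m → ℂ,
      fderiv ℝ (fun z : Fin m → ℂ => ∑ k, Complex.normSq (z k) • γ k) z (X z) = 0 :=
  stmt_12_general m n γ f hf X hHam hEquiv
end

section
/- Let m ≥ 2 be even and a > 0. Let N = {z ∈ ℂ^m : there exist θ ∈ ℝ and u ∈ ℝ^m with z_k = e^{iθ} u_k for all k and u_1² + ⋯ + u_m² = a}. Then N is homeomorphic to S^{m−1} × S^1, the product of the (m−1)-dimensional sphere and the circle. -/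
/-!
A complex structure `J` on `ℝᵐ` (a linear isometry with `J² = -1`, which exists because `m` is
even) lets `ℂ` act on `ℝᵐ` by `α • x = (Re α) x + (Im α) J x`, isometrically when `‖α‖ = 1`.
The point `z = e^{iθ} u` of `N` determines `v = e^{iθ} • u / √a ∈ S^{m-1}` and
`w = e^{2iθ} ∈ S¹`; both are unchanged under `(θ, u) ↦ (θ + π, -u)` and are given by the
continuous formulas `v = (Re z + J Im z) / √a` and `w = ∑ z_k² / a`. Conversely, for either
square root `β` of `w`, the point `β · (β̄ • √a v)` is the preimage of `(v, w)`, and it equals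
`√a / 2 · ((1 + w) v + i (w - 1) J v)`, a formula that needs no choice of `β`.
-/

noncomputable section

open Complex ComplexConjugate Metric Module

def spreadSphere (ι : Type*) [Fintype ι] (a : ℝ) : Set (ι → ℂ) :=
  {z | ∃ (θ : ℝ) (u : ι → ℝ), (∀ k, z k = exp (θ * I) * u k) ∧ ∑ k, u k ^ 2 = a}

variable {ι : Type*} [Fintype ι]

theorem Complex.exists_sq_eq_of_norm_eq_one {w : ℂ} (hw : ‖w‖ = 1) :
    ∃ β : ℂ, ‖β‖ = 1 ∧ β ^ 2 = w := by
  obtain ⟨β, rfl⟩ := IsAlgClosed.exists_pow_nat_eq w two_pos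
  rw [norm_pow, pow_eq_one_iff_of_nonneg (norm_nonneg β) two_ne_zero] at hw
  exact ⟨β, hw, rfl⟩

theorem Complex.mul_re_of_norm_eq_one {β : ℂ} (hβ : ‖β‖ = 1) :
    β * β.re = (1 + β ^ 2) / 2 := by
  have h : β * conj β = 1 := by rw [mul_conj', hβ]; simp
  rw [re_eq_add_conj]
  linear_combination h / 2

theorem Complex.I_mul_mul_im_of_norm_eq_one {β : ℂ} (hβ : ‖β‖ = 1) :
    I * β * β.im = (β ^ 2 - 1) / 2 := by
  have h : β * conj β = 1 := by rw [mul_conj', hβ]; simp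
  rw [im_eq_sub_conj]
  field_simp
  linear_combination -h

theorem mem_spreadSphere_iff {a : ℝ} {z : ι → ℂ} :
    z ∈ spreadSphere ι a ↔
      ∃ (α : ℂ) (u : EuclideanSpace ℝ ι),
        ‖α‖ = 1 ∧ ‖u‖ ^ 2 = a ∧ z = fun k => α * u k := by
  simp only [EuclideanSpace.real_norm_sq_eq]
  constructor
  · rintro ⟨θ, u, hz, hu⟩
    exact ⟨exp (θ * I), WithLp.toLp 2 u, norm_exp_ofReal_mul_I θ, hu, funext hz⟩
  · rintro ⟨α, u, hα, hu, rfl⟩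
    refine ⟨arg α, u, fun k => ?_, hu⟩
    conv_lhs => rw [← norm_mul_exp_arg_mul_I α, hα, ofReal_one, one_mul]

section ComplexStructure

variable (J : EuclideanSpace ℝ ι →ₗᵢ[ℝ] EuclideanSpace ℝ ι)

def jsmul (α : ℂ) : EuclideanSpace ℝ ι →ₗ[ℝ] EuclideanSpace ℝ ι :=
  α.re • LinearMap.id + α.im • J.toLinearMap

theorem jsmul_apply (α : ℂ) (x : EuclideanSpace ℝ ι) :
    jsmul J α x = α.re • x + α.im • J x :=
  rfl

variable {J}

theorem inner_self_apply_eq_zero (hJ : ∀ x, J (J x) = -x) (x : EuclideanSpace ℝ ι) :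
    inner ℝ x (J x) = 0 := by
  have h : inner ℝ (J x) (J (J x)) = inner ℝ x (J x) := J.inner_map_map x (J x)
  rw [hJ, inner_neg_right, real_inner_comm] at h
  linarith

theorem norm_jsmul (hJ : ∀ x, J (J x) = -x) (α : ℂ) (x : EuclideanSpace ℝ ι) :
    ‖jsmul J α x‖ = ‖α‖ * ‖x‖ := by
  rw [← sq_eq_sq₀ (norm_nonneg _) (by positivity), jsmul_apply, norm_add_sq_real, norm_smul,
    norm_smul, real_inner_smul_left, real_inner_smul_right, inner_self_apply_eq_zero hJ,
    J.norm_map, mul_pow, mul_pow, mul_pow, Real.norm_eq_abs, Real.norm_eq_abs, sq_abs, sq_abs,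
    Complex.sq_norm, normSq_apply]
  ring

theorem jsmul_jsmul (hJ : ∀ x, J (J x) = -x) (α β : ℂ) (x : EuclideanSpace ℝ ι) :
    jsmul J α (jsmul J β x) = jsmul J (α * β) x := by
  simp only [jsmul_apply, map_add, map_smul, hJ, mul_re, mul_im]
  module

theorem jsmul_one (x : EuclideanSpace ℝ ι) : jsmul J 1 x = x := by
  simp [jsmul_apply]

variable (J) (a : ℝ)

def toSphereProd (z : ι → ℂ) : EuclideanSpace ℝ ι × ℂ :=
  ((√a)⁻¹ • (WithLp.toLp 2 (fun k => (z k).re) + J (WithLp.toLp 2 (fun k => (z k).im))),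
    (∑ k, z k ^ 2) / a)

def ofSphereProd (p : EuclideanSpace ℝ ι × ℂ) : ι → ℂ :=
  fun k => √a / 2 * ((1 + p.2) * p.1 k + I * (p.2 - 1) * J p.1 k)

@[fun_prop]
theorem continuous_toSphereProd : Continuous (toSphereProd J a) := by
  unfold toSphereProd
  fun_prop

@[fun_prop]
theorem continuous_ofSphereProd : Continuous (ofSphereProd J a) := by
  unfold ofSphereProd
  fun_prop

variable {J a}

theorem toSphereProd_smul (ha : 0 < a) (α : ℂ) (u : EuclideanSpace ℝ ι)
    (hu : ‖u‖ ^ 2 = a) :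
    toSphereProd J a (fun k => α * u k) = ((√a)⁻¹ • jsmul J α u, α ^ 2) := by
  have hre : WithLp.toLp 2 (fun k => (α * u k).re) = α.re • u := by ext k; simp
  have him : WithLp.toLp 2 (fun k => (α * u k).im) = α.im • u := by ext k; simp
  have hsum : ∑ k, (α * u k) ^ 2 = α ^ 2 * a := by
    rw [← hu, EuclideanSpace.real_norm_sq_eq]
    push_cast
    simp only [mul_pow, Finset.mul_sum]
  have ha' : (a : ℂ) ≠ 0 := ofReal_ne_zero.2 ha.ne'
  rw [toSphereProd, hre, him, hsum, mul_div_cancel_right₀ _ ha', map_smul, jsmul_apply]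

theorem ofSphereProd_sq {β : ℂ} (hβ : ‖β‖ = 1) (v : EuclideanSpace ℝ ι) :
    ofSphereProd J a (v, β ^ 2) = fun k => β * (√a • jsmul J (conj β) v) k := by
  funext k
  simp only [ofSphereProd, jsmul_apply, PiLp.smul_apply, PiLp.add_apply, smul_eq_mul, conj_re,
    conj_im]
  push_cast
  linear_combination (-√a * v k) * mul_re_of_norm_eq_one hβ
    - (√a * J v k * I) * I_mul_mul_im_of_norm_eq_one hβ + (√a * J v k * β * β.im) * I_mul_I

theorem toSphereProd_mem (hJ : ∀ x, J (J x) = -x) (ha : 0 < a) {z : ι → ℂ}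
    (hz : z ∈ spreadSphere ι a) :
    toSphereProd J a z ∈ sphere (0 : EuclideanSpace ℝ ι) 1 ×ˢ sphere (0 : ℂ) 1 := by
  obtain ⟨α, u, hα, hu, rfl⟩ := mem_spreadSphere_iff.1 hz
  have hu' : ‖u‖ = √a := by rw [← hu, Real.sqrt_sq (norm_nonneg _)]
  rw [toSphereProd_smul ha α u hu]
  simp [norm_smul, norm_jsmul hJ, hα, hu', abs_of_pos (Real.sqrt_pos.2 ha),
    (Real.sqrt_pos.2 ha).ne']

theorem ofSphereProd_toSphereProd (hJ : ∀ x, J (J x) = -x) (ha : 0 < a) {z : ι → ℂ}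
    (hz : z ∈ spreadSphere ι a) : ofSphereProd J a (toSphereProd J a z) = z := by
  obtain ⟨α, u, hα, hu, rfl⟩ := mem_spreadSphere_iff.1 hz
  rw [toSphereProd_smul ha α u hu, ofSphereProd_sq hα, map_smul, smul_smul,
    mul_inv_cancel₀ (Real.sqrt_pos.2 ha).ne', one_smul, jsmul_jsmul hJ, conj_mul', hα]
  simp [jsmul_one]

theorem exists_ofSphereProd_eq (hJ : ∀ x, J (J x) = -x) (ha : 0 < a)
    {p : EuclideanSpace ℝ ι × ℂ}
    (hp : p ∈ sphere (0 : EuclideanSpace ℝ ι) 1 ×ˢ sphere (0 : ℂ) 1) :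
    ∃ (β : ℂ) (u : EuclideanSpace ℝ ι), ‖β‖ = 1 ∧ ‖u‖ ^ 2 = a ∧
      ofSphereProd J a p = (fun k => β * u k) ∧ toSphereProd J a (fun k => β * u k) = p := by
  obtain ⟨v, w⟩ := p
  obtain ⟨hv, hw⟩ : ‖v‖ = 1 ∧ ‖w‖ = 1 := by simpa using hp
  obtain ⟨β, hβ, rfl⟩ := Complex.exists_sq_eq_of_norm_eq_one hw
  have hu : ‖√a • jsmul J (conj β) v‖ ^ 2 = a := by
    simp [norm_smul, norm_jsmul hJ, hβ, hv, ha.le]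
  refine ⟨β, _, hβ, hu, ofSphereProd_sq hβ v, ?_⟩
  rw [toSphereProd_smul ha β _ hu, map_smul, smul_smul,
    inv_mul_cancel₀ (Real.sqrt_pos.2 ha).ne', one_smul, jsmul_jsmul hJ, mul_conj', hβ]
  simp [jsmul_one]

end ComplexStructure

def spreadSphereHomeomorph {J : EuclideanSpace ℝ ι →ₗᵢ[ℝ] EuclideanSpace ℝ ι}
    (hJ : ∀ x, J (J x) = -x) {a : ℝ} (ha : 0 < a) :
    spreadSphere ι a ≃ₜ ↥(sphere (0 : EuclideanSpace ℝ ι) 1 ×ˢ sphere (0 : ℂ) 1) where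
  toFun z := ⟨toSphereProd J a z, toSphereProd_mem hJ ha z.2⟩
  invFun p := ⟨ofSphereProd J a p, by
    obtain ⟨β, u, hβ, hu, h, -⟩ := exists_ofSphereProd_eq hJ ha p.2
    exact h ▸ mem_spreadSphere_iff.2 ⟨β, u, hβ, hu, rfl⟩⟩
  left_inv z := Subtype.ext (ofSphereProd_toSphereProd hJ ha z.2)
  right_inv p := by
    obtain ⟨β, u, -, -, h, h'⟩ := exists_ofSphereProd_eq hJ ha p.2
    exact Subtype.ext (by simp only [h, h'])
  continuous_toFun := by fun_prop
  continuous_invFun := by fun_prop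

theorem exists_complexStructure (n : ℕ) :
    ∃ J : EuclideanSpace ℝ (Fin (n + n)) →ₗᵢ[ℝ] EuclideanSpace ℝ (Fin (n + n)),
      ∀ x, J (J x) = -x := by
  let := InnerProductSpace.complexToReal (G := EuclideanSpace ℂ (Fin n))
  have hdim : finrank ℝ (EuclideanSpace ℂ (Fin n)) = n + n := by
    rw [finrank_real_of_complex, finrank_euclideanSpace_fin, two_mul]
  let φ := ((stdOrthonormalBasis ℝ (EuclideanSpace ℂ (Fin n))).reindex (finCongr hdim)).repr
  let mulI : EuclideanSpace ℂ (Fin n) →ₗᵢ[ℝ] EuclideanSpace ℂ (Fin n) :=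
    { toLinearMap := (LinearMap.lsmul ℂ _ I).restrictScalars ℝ
      norm_map' := fun x => by simp [norm_smul] }
  refine ⟨φ.toLinearIsometry.comp (mulI.comp φ.symm.toLinearIsometry), fun x => ?_⟩
  simp [mulI, smul_smul]

end

theorem stmt_15_general (m : ℕ) (hme : Even m) (a : ℝ) (ha : 0 < a) :
    Nonempty
      ({z : Fin m → ℂ | ∃ (θ : ℝ) (u : Fin m → ℝ),
          (∀ k, z k = Complex.exp ((θ : ℂ) * Complex.I) * (u k : ℂ)) ∧
          (∑ k, u k ^ 2) = a} ≃ₜ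
        (Metric.sphere (0 : EuclideanSpace ℝ (Fin m)) 1 × Metric.sphere (0 : ℂ) 1)) := by
  obtain ⟨n, rfl⟩ := hme
  obtain ⟨J, hJ⟩ := exists_complexStructure n
  exact ⟨(spreadSphereHomeomorph hJ ha).trans (Homeomorph.Set.prod _ _)⟩

/-- For even `m ≥ 2` and `a > 0`, the manifold
`N = {z ∈ ℂᵐ : z = e^{iθ}u, u ∈ ℝᵐ, ∑ u_k² = a}` (the real sphere spread by the diagonal
circle) is homeomorphic to `S^{m-1} × S¹`. -/
theorem stmt_15 (m : ℕ) (hm : 2 ≤ m) (hme : Even m) (a : ℝ) (ha : 0 < a) :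
    Nonempty
      ({z : Fin m → ℂ | ∃ (θ : ℝ) (u : Fin m → ℝ),
          (∀ k, z k = Complex.exp ((θ : ℂ) * Complex.I) * (u k : ℂ)) ∧
          (∑ k, u k ^ 2) = a} ≃ₜ
        (Metric.sphere (0 : EuclideanSpace ℝ (Fin m)) 1 × Metric.sphere (0 : ℂ) 1)) :=
  stmt_15_general m hme a ha
end

section
/- Let A be a real n×m matrix of rank n with columns a_1, …, a_m ∈ ℝ^n, let b ∈ ℝ^m, and let Γ be a real (m−n)×m matrix of rank m−n, with columns γ_1, …, γ_m ∈ ℝ^{m−n}, whose rows form a basis of {y ∈ ℝ^m : y_1 a_1 + ⋯ + y_m a_m = 0}. Suppose the polytope P = {x ∈ ℝ^n : ⟨a_i, x⟩ + b_i ≥ 0, 1 ≤ i ≤ m} is simple, i.e. for every x ∈ P the vectors {a_i : ⟨a_i, x⟩ + b_i = 0} are linearly independent. Then Γb is a regular value of the map μ_Γ : ℂ^m → ℝ^{m−n}, μ_Γ(z) = Σ_k |z_k|² γ_k: for every z ∈ ℂ^m with μ_Γ(z) = Γb, the real Fréchet derivative of μ_Γ at z is surjective. -/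
/-! The derivative of `μ_Γ` at `z` is `w ↦ ∑ₖ 2⟨zₖ, wₖ⟩ γₖ`, whose image contains every `γₖ` with
`zₖ ≠ 0`; it remains to see that these `γₖ` span. Since `ker Γ` is the row space of `A`, the equation
`μ_Γ(z) = Γb` yields `x` with `⟨aₖ, x⟩ + bₖ = |zₖ|²`: a point of `P` lying exactly on the facets
with `zₖ = 0`. A functional `v` vanishing on the other `γₖ` gives the relation `y = Γᵀv` among the
`aₖ`, supported on the facets through `x`; simplicity forces `y = 0`, and independence of the rows
of `Γ` then forces `v = 0`. -/

namespace Matrix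

theorem sum_smul_transpose_eq_mulVec {R ι ρ : Type*} [CommSemiring R] [Fintype ι]
    (A : Matrix ρ ι R) (y : ι → R) : ∑ k, y k • Aᵀ k = A *ᵥ y := by
  simp [mulVec_eq_sum]

variable {K ι κ ρ : Type*} [Field K] [Fintype ι] [Fintype κ]

theorem ker_mulVecLin_eq_range_mulVecLin_transpose [Fintype ρ] {A : Matrix ρ ι K}
    {Γ : Matrix κ ι K}
    (h : Submodule.span K (Set.range Γ.row) = LinearMap.ker A.mulVecLin) :
    LinearMap.ker Γ.mulVecLin = LinearMap.range Aᵀ.mulVecLin := by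
  symm
  apply Submodule.eq_of_le_of_finrank_eq
  · rintro _ ⟨x, rfl⟩
    have hrow : ∀ j, A *ᵥ Γ j = 0 := fun j =>
      (h ▸ Submodule.subset_span ⟨j, rfl⟩ : Γ.row j ∈ LinearMap.ker A.mulVecLin)
    ext j
    change Γ j ⬝ᵥ (Aᵀ *ᵥ x) = 0
    rw [dotProduct_mulVec, vecMul_transpose, hrow, zero_dotProduct]
  · have hΓ := LinearMap.finrank_range_add_finrank_ker Γ.mulVecLin
    have hA := LinearMap.finrank_range_add_finrank_ker A.mulVecLin
    have hrank : Γ.rank = Module.finrank K (LinearMap.ker A.mulVecLin) := by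
      rw [rank_eq_finrank_span_row, h]
    change Aᵀ.rank = _
    change Γ.rank + _ = _ at hΓ
    change A.rank + _ = _ at hA
    rw [rank_transpose]
    omega

theorem span_image_transpose_eq_top {A : Matrix ρ ι K} {Γ : Matrix κ ι K}
    (hind : LinearIndependent K Γ.row) (hrow : ∀ j, A *ᵥ Γ j = 0) (p : ι → Prop)
    (hp : LinearIndependent K fun i : {i // p i} => Aᵀ i) :
    Submodule.span K (Γᵀ '' {i | ¬ p i}) = ⊤ := by
  by_contra hne
  obtain ⟨f, hf, hmap⟩ :=
    Submodule.exists_dual_map_eq_bot_of_lt_top (lt_top_iff_ne_top.2 hne) inferInstance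
  classical
  obtain ⟨v, rfl⟩ := (dotProductEquiv K κ).surjective f
  set y := v ᵥ* Γ
  have hy_off : ∀ i, ¬ p i → y i = 0 := by
    intro i hi
    have hmem : dotProductEquiv K κ v (Γᵀ i) ∈
        (Submodule.span K (Γᵀ '' {i | ¬ p i})).map (dotProductEquiv K κ v) :=
      Submodule.mem_map_of_mem (Submodule.subset_span ⟨i, hi, rfl⟩)
    rw [hmap, Submodule.mem_bot] at hmem
    exact hmem
  have hy_on : ∀ i, p i → y i = 0 := by
    have hAy : ∑ i, y i • Aᵀ i = 0 := by
      simp only [sum_smul_transpose_eq_mulVec, y, vecMul_eq_sum, mulVec_sum, mulVec_smul, hrow,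
        smul_zero, Finset.sum_const_zero]
    have hAy_off : ∑ i : {i // ¬ p i}, y i • Aᵀ i = 0 :=
      Finset.sum_eq_zero fun i _ => by rw [hy_off i i.2, zero_smul]
    rw [← Fintype.sum_subtype_add_sum_subtype p, hAy_off, add_zero] at hAy
    exact fun i hi => Fintype.linearIndependent_iff.1 hp _ hAy ⟨i, hi⟩
  have hv : v = 0 := by
    have hy : ∑ j, v j • Γ.row j = 0 := by
      change ∑ j, v j • Γ j = 0
      rw [← vecMul_eq_sum]
      funext i
      by_cases hi : p i
      exacts [hy_on i hi, hy_off i hi]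
    exact funext (Fintype.linearIndependent_iff.1 hind v hy)
  exact hf (by rw [hv, map_zero])

end Matrix

section MomentMap

variable {ι E F : Type*} [Fintype ι] [NormedAddCommGroup E] [InnerProductSpace ℝ E]
  [NormedAddCommGroup F] [NormedSpace ℝ F]

theorem hasFDerivAt_sum_norm_sq_smul (γ : ι → F) (z : ι → E) :
    HasFDerivAt (fun w : ι → E => ∑ k, ‖w k‖ ^ 2 • γ k)
      (∑ k, ((2 • (innerSL ℝ (z k)).comp (ContinuousLinearMap.proj k)).smulRight (γ k))) z :=
  HasFDerivAt.fun_sum fun k _ => ((hasFDerivAt_apply k z).norm_sq).smul_const (γ k)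

theorem fderiv_sum_norm_sq_smul_apply (γ : ι → F) (z w : ι → E) :
    fderiv ℝ (fun w : ι → E => ∑ k, ‖w k‖ ^ 2 • γ k) z w =
      ∑ k, (2 * inner ℝ (z k) (w k)) • γ k := by
  simp [(hasFDerivAt_sum_norm_sq_smul γ z).fderiv]

theorem span_le_range_fderiv_sum_norm_sq_smul (γ : ι → F) (z : ι → E) :
    Submodule.span ℝ (γ '' {k | z k ≠ 0}) ≤
      LinearMap.range (fderiv ℝ (fun w : ι → E => ∑ k, ‖w k‖ ^ 2 • γ k) z : (ι → E) →ₗ[ℝ] F) := by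
  classical
  refine Submodule.span_le.2 ?_
  rintro _ ⟨k, hk, rfl⟩
  refine ⟨Pi.single k ((2 * ‖z k‖ ^ 2)⁻¹ • z k), ?_⟩
  have hk : ‖z k‖ ≠ 0 := norm_ne_zero_iff.2 hk
  change fderiv ℝ _ z _ = γ k
  rw [fderiv_sum_norm_sq_smul_apply, Finset.sum_eq_single k (fun j _ hj => by simp [hj])
    (by simp), Pi.single_eq_same, real_inner_smul_right, real_inner_self_eq_norm_sq]
  rw [show 2 * ((2 * ‖z k‖ ^ 2)⁻¹ * ‖z k‖ ^ 2) = (1 : ℝ) by field_simp, one_smul]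

end MomentMap

open Matrix

theorem stmt_17_general (n m : ℕ) (A : Matrix (Fin n) (Fin m) ℝ) (b : Fin m → ℝ)
    (Γ : Matrix (Fin (m - n)) (Fin m) ℝ)
    (hind : LinearIndependent ℝ (fun j => Γ j))
    (hspan : (Submodule.span ℝ (Set.range fun j => Γ j) : Set (Fin m → ℝ)) =
      {y : Fin m → ℝ | ∑ k, y k • Aᵀ k = 0})
    (hsimple : ∀ x : Fin n → ℝ, (∀ i, 0 ≤ (∑ r, A r i * x r) + b i) →
      LinearIndependent ℝ
        (fun i : {i : Fin m // (∑ r, A r i * x r) + b i = 0} => Aᵀ (i : Fin m))) :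
    ∀ z : Fin m → ℂ, (∑ k, Complex.normSq (z k) • Γᵀ k) = Γ.mulVec b →
      Function.Surjective
        ⇑(fderiv ℝ (fun z : Fin m → ℂ => ∑ k, Complex.normSq (z k) • Γᵀ k) z) := by
  intro z hz
  have hrowspace : Submodule.span ℝ (Set.range Γ.row) = LinearMap.ker A.mulVecLin :=
    SetLike.coe_injective (hspan.trans (by ext y; simp [sum_smul_transpose_eq_mulVec]))
  obtain ⟨x, hx⟩ : ∃ x : Fin n → ℝ, ∀ k, (∑ r, A r k * x r) + b k = Complex.normSq (z k) := by
    have hmem : (fun k => Complex.normSq (z k)) - b ∈ LinearMap.ker Γ.mulVecLin := by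
      simp [mulVec_sub, ← hz, sum_smul_transpose_eq_mulVec]
    obtain ⟨x, hx⟩ := ker_mulVecLin_eq_range_mulVecLin_transpose hrowspace ▸ hmem
    exact ⟨x, fun k => eq_sub_iff_add_eq.1 (congrFun hx k)⟩
  have hfacets : {k | z k ≠ 0} = {k | ¬ (∑ r, A r k * x r) + b k = 0} := by
    ext k; simp [hx]
  have htop := span_image_transpose_eq_top hind
    (fun j => (hrowspace ▸ Submodule.subset_span ⟨j, rfl⟩ : Γ.row j ∈ LinearMap.ker A.mulVecLin))
    _ (hsimple x fun k => hx k ▸ Complex.normSq_nonneg _)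
  have hμ : (fun z : Fin m → ℂ => ∑ k, Complex.normSq (z k) • Γᵀ k) =
      fun z => ∑ k, ‖z k‖ ^ 2 • Γᵀ k := by
    simp [Complex.normSq_eq_norm_sq]
  rw [hμ]
  refine LinearMap.range_eq_top.1 (top_unique ?_)
  rw [← htop, ← hfacets]
  exact span_le_range_fderiv_sum_norm_sq_smul _ z

/-- If the polytope `P = {x : ⟨aᵢ,x⟩ + bᵢ ≥ 0}` is simple (at every point of `P` the normals of
the facets through that point are linearly independent), then `Γb` is a regular value of the
moment map `μ_Γ(z) = ∑ₖ |z_k|² γ_k`: at every point of the level set `μ_Γ⁻¹(Γb)` the real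
Fréchet derivative of `μ_Γ` is surjective. Here the rows of `Γ` (of rank `m-n`) form a basis
of `{y : ∑ₖ yₖ • aₖ = 0}`, and `A` has rank `n`. -/
theorem stmt_17 (n m : ℕ) (A : Matrix (Fin n) (Fin m) ℝ) (b : Fin m → ℝ)
    (Γ : Matrix (Fin (m - n)) (Fin m) ℝ)
    (hA : A.rank = n) (hΓrank : Γ.rank = m - n)
    (hind : LinearIndependent ℝ (fun j => Γ j))
    (hspan : (Submodule.span ℝ (Set.range fun j => Γ j) : Set (Fin m → ℝ)) =
      {y : Fin m → ℝ | ∑ k, y k • Aᵀ k = 0})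
    (hsimple : ∀ x : Fin n → ℝ, (∀ i, 0 ≤ (∑ r, A r i * x r) + b i) →
      LinearIndependent ℝ
        (fun i : {i : Fin m // (∑ r, A r i * x r) + b i = 0} => Aᵀ (i : Fin m))) :
    ∀ z : Fin m → ℂ, (∑ k, Complex.normSq (z k) • Γᵀ k) = Γ.mulVec b →
      Function.Surjective
        ⇑(fderiv ℝ (fun z : Fin m → ℂ => ∑ k, Complex.normSq (z k) • Γᵀ k) z) :=
  stmt_17_general n m A b Γ hind hspan hsimple
end
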